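/- Inverse connection: for all n ≥ 0 and all y, q with q^{n-k+1} ≠ 1 for the relevant k, h_n(y|q) = ∑_{k=0}^{⌊n/2⌋} ((q^k - q^{n-k+1})/(1 - q^{n-k+1})) [n choose k]_q U_{n-2k}(y). -/
import Mathlib


/-- The Gaussian (q-)binomial coefficient, defined via the q-Pascal rule. -/
def gaussBinom (q : ℂ) : ℕ → ℕ → ℂ
  | _, 0 => 1
  | 0, _ + 1 => 0
  | n + 1, k + 1 => gaussBinom q n k + q ^ (k + 1) * gaussBinom q n (k + 1)

/-- The continuous q-Hermite polynomials. -/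
def qHermite (q x : ℂ) : ℕ → ℂ
  | 0 => 1
  | 1 => 2 * x
  | n + 2 => 2 * x * qHermite q x (n + 1) - (1 - q ^ (n + 1)) * qHermite q x n

/-- The Chebyshev polynomials of the second kind. -/
def chebU (x : ℂ) : ℕ → ℂ
  | 0 => 1
  | 1 => 2 * x
  | n + 2 => 2 * x * chebU x (n + 1) - chebU x n

lemma gb_zero (q : ℂ) (n : ℕ) : gaussBinom q n 0 = 1 := by cases n <;> rfl

lemma gb_succ (q : ℂ) (n k : ℕ) :
    gaussBinom q (n+1) (k+1) = gaussBinom q n k + q ^ (k+1) * gaussBinom q n (k+1) := rfl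

lemma gb_zero_succ (q : ℂ) (k : ℕ) : gaussBinom q 0 (k+1) = 0 := rfl

lemma gb_eq_zero (q : ℂ) : ∀ n k, n < k → gaussBinom q n k = 0 := by
  intro n
  induction n with
  | zero => intro k hk; match k, hk with | (j+1), _ => rfl
  | succ n ih =>
    intro k hk
    match k, hk with
    | (j+1), hk =>
      rw [gb_succ, ih j (by omega), ih (j+1) (by omega)]
      ring

lemma gb_L' (q : ℂ) : ∀ n k, (1 - q^(k+1)) * gaussBinom q n (k+1) = (1 - q^(n-k)) * gaussBinom q n k := by
  intro n
  induction n with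
  | zero =>
    intro k
    rw [gb_zero_succ]
    match k with
    | 0 => simp [gaussBinom]
    | (j+1) => rw [gb_zero_succ]; ring
  | succ n ih =>
    intro k
    match k with
    | 0 =>
      rw [gb_succ, gb_zero, gb_zero, Nat.sub_zero]
      have h := ih 0
      rw [gb_zero, Nat.sub_zero] at h
      linear_combination q * h + (1 - q^1) * h * 0
    | (j+1) =>
      rw [gb_succ, gb_succ]
      by_cases hj : j < n
      · obtain ⟨t, ht⟩ : ∃ t, n = j + 1 + t := ⟨n - j - 1, by omega⟩
        subst ht
        have e1 := ih j
        have e2 := ih (j+1)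
        rw [show j + 1 + t - j = t + 1 from by omega] at e1
        rw [show j + 1 + t - (j+1) = t from by omega] at e2
        rw [show j + 1 + t + 1 - (j + 1) = t + 1 from by omega]
        linear_combination q^(j+2) * e2 + e1
      · rw [gb_eq_zero q n (j+1) (by omega), gb_eq_zero q n (j+2) (by omega),
          show n + 1 - (j+1) = 0 from by omega]
        ring

lemma gb_diag (q : ℂ) : ∀ n, gaussBinom q n n = 1 := by
  intro n
  induction n with
  | zero => rfl
  | succ n ih => rw [gb_succ, ih, gb_eq_zero q n (n+1) (by omega)]; ring

lemma gb_P2 (q : ℂ) (n k : ℕ) :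
    gaussBinom q (n+1) (k+1) = q^(n-k) * gaussBinom q n k + gaussBinom q n (k+1) := by
  rw [gb_succ]
  linear_combination - gb_L' q n k

lemma gb_symm (q : ℂ) : ∀ n k, k ≤ n → gaussBinom q n (n - k) = gaussBinom q n k := by
  intro n
  induction n with
  | zero => intro k hk; interval_cases k; rfl
  | succ n ih =>
    intro k hk
    match k with
    | 0 => rw [Nat.sub_zero, gb_diag, gb_zero]
    | (j+1) =>
      by_cases hj : j = n
      · subst hj; rw [show j + 1 - (j+1) = 0 from by omega, gb_zero, gb_diag]
      · obtain ⟨i, hi⟩ : ∃ i, n - j - 1 = i := ⟨n - j - 1, rfl⟩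
        rw [show n + 1 - (j+1) = i + 1 from by omega, gb_P2, gb_succ,
          show n - i = j + 1 from by omega,
          show i = n - (j+1) from by omega,
          show n - (j+1) + 1 = n - j from by omega,
          ih (j+1) (by omega), ih j (by omega)]
        ring

lemma gb_F (q : ℂ) (n k : ℕ) :
    (1 - q^(k+1)) * gaussBinom q (n+1) (k+1) = (1 - q^(n+1)) * gaussBinom q n k := by
  by_cases hk : k ≤ n
  · obtain ⟨t, ht⟩ : ∃ t, n = k + t := ⟨n - k, by omega⟩
    subst ht
    have e := gb_L' q (k+t) k
    rw [show k + t - k = t from by omega] at e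
    rw [gb_succ]
    linear_combination q^(k+1) * e
  · rw [gb_eq_zero q (n+1) (k+1) (by omega), gb_eq_zero q n k (by omega)]
    ring

lemma gb_R (q : ℂ) (n k : ℕ) :
    gaussBinom q (n+2) (k+1) = gaussBinom q (n+1) (k+1) + gaussBinom q (n+1) k
      - (1 - q^(n+1)) * gaussBinom q n k := by
  rw [show (n+2) = (n+1)+1 from rfl, gb_succ]
  linear_combination - gb_F q n k



def dCoef (q : ℂ) (n : ℕ) : ℕ → ℂ
  | 0 => 1
  | k + 1 => gaussBinom q n (k+1) - gaussBinom q n k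

lemma dCoef_zero (q : ℂ) (n : ℕ) : dCoef q n 0 = 1 := rfl

lemma d_rec (q : ℂ) (n k : ℕ) :
    dCoef q (n+2) (k+1) = dCoef q (n+1) (k+1) + dCoef q (n+1) k
      - (1 - q^(n+1)) * dCoef q n k := by
  match k with
  | 0 =>
    simp only [dCoef, gb_zero]
    have h := gb_R q n 0
    rw [gb_zero, gb_zero] at h
    linear_combination h
  | (j+1) =>
    simp only [dCoef]
    linear_combination gb_R q n (j+1) - gb_R q n j

lemma d_mid_zero (q : ℂ) (m : ℕ) : dCoef q (2*m+1) (m+1) = 0 := by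
  have h := gb_symm q (2*m+1) m (by omega)
  rw [show 2*m+1-m = m+1 from by omega] at h
  simp only [dCoef]
  rw [h]; ring

lemma cheb_rec (y : ℂ) (j : ℕ) :
    2 * y * chebU y (j+1) = chebU y (j+2) + chebU y j := by
  rw [show chebU y (j+2) = 2 * y * chebU y (j+1) - chebU y j from rfl]
  ring

lemma d_mid_zero' (q : ℂ) (m : ℕ) : dCoef q (m+m+1) (m+1) = 0 := by
  have h := gb_symm q (m+m+1) m (by omega)
  rw [show m+m+1-m = m+1 from by omega] at h
  simp only [dCoef]
  rw [h]; ring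

theorem sumId (q y : ℂ) : ∀ n, qHermite q y n =
    ∑ k ∈ Finset.range (n/2+1), dCoef q n k * chebU y (n - 2*k) := by
  have key : ∀ n, (qHermite q y n =
      ∑ k ∈ Finset.range (n/2+1), dCoef q n k * chebU y (n - 2*k)) ∧
      (qHermite q y (n+1) =
      ∑ k ∈ Finset.range ((n+1)/2+1), dCoef q (n+1) k * chebU y (n+1 - 2*k)) := by
    intro n
    induction n with
    | zero =>
      constructor
      · simp [qHermite, dCoef, chebU]
      · simp [qHermite, dCoef, chebU]
    | succ n ih =>
      refine ⟨ih.2, ?_⟩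
      have h1 := ih.2
      have h0 := ih.1
      rw [show n+1+1 = n+2 from by omega,
        show qHermite q y (n+2) = 2*y*qHermite q y (n+1) - (1-q^(n+1))*qHermite q y n from rfl,
        h1, h0]
      rcases Nat.even_or_odd n with ⟨m, rfl⟩ | ⟨m, rfl⟩
      · -- even case : n = m + m
        rw [show (m+m+2)/2+1 = m+2 from by omega, show (m+m+1)/2+1 = m+1 from by omega,
          show (m+m)/2+1 = m+1 from by omega]
        have hA : 2*y * ∑ k ∈ Finset.range (m+1), dCoef q (m+m+1) k * chebU y (m+m+1-2*k)
            = (∑ k ∈ Finset.range (m+1), dCoef q (m+m+1) k * chebU y (m+m+2-2*k))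
              + ∑ k ∈ Finset.range (m+1), dCoef q (m+m+1) k * chebU y (m+m-2*k) := by
          rw [Finset.mul_sum, ← Finset.sum_add_distrib]
          refine Finset.sum_congr rfl fun k hk => ?_
          simp only [Finset.mem_range] at hk
          rw [show m+m+1-2*k = (m+m-2*k)+1 from by omega,
              show m+m+2-2*k = (m+m-2*k)+2 from by omega]
          linear_combination dCoef q (m+m+1) k * cheb_rec y (m+m-2*k)
        rw [hA]
        have hF : (∑ k ∈ Finset.range (m+1), dCoef q (m+m+1) k * chebU y (m+m+2-2*k))
            = (∑ k ∈ Finset.range m, dCoef q (m+m+1) (k+1) * chebU y (m+m-2*k))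
              + chebU y (m+m+2) := by
          rw [Finset.sum_range_succ']
          congr 1
          · refine Finset.sum_congr rfl fun k hk => ?_
            simp only [Finset.mem_range] at hk
            rw [show m+m+2-2*(k+1) = m+m-2*k from by omega]
          · rw [dCoef_zero, show m+m+2-2*0 = m+m+2 from by omega, one_mul]
        rw [hF]
        have hT : (∑ k ∈ Finset.range (m+2), dCoef q (m+m+2) k * chebU y (m+m+2-2*k))
            = (∑ k ∈ Finset.range (m+1), dCoef q (m+m+2) (k+1) * chebU y (m+m-2*k))
              + chebU y (m+m+2) := by
          rw [Finset.sum_range_succ']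
          congr 1
          · refine Finset.sum_congr rfl fun k hk => ?_
            simp only [Finset.mem_range] at hk
            rw [show m+m+2-2*(k+1) = m+m-2*k from by omega]
          · rw [dCoef_zero, show m+m+2-2*0 = m+m+2 from by omega, one_mul]
        rw [hT]
        have hD : ∑ k ∈ Finset.range (m+1), dCoef q (m+m+2) (k+1) * chebU y (m+m-2*k)
            = ((∑ k ∈ Finset.range (m+1), dCoef q (m+m+1) (k+1) * chebU y (m+m-2*k))
              + (∑ k ∈ Finset.range (m+1), dCoef q (m+m+1) k * chebU y (m+m-2*k)))
              - (1-q^(m+m+1)) * ∑ k ∈ Finset.range (m+1), dCoef q (m+m) k * chebU y (m+m-2*k) := by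
          rw [Finset.mul_sum, ← Finset.sum_add_distrib, ← Finset.sum_sub_distrib]
          refine Finset.sum_congr rfl fun k hk => ?_
          have hrec := d_rec q (m+m) k
          linear_combination chebU y (m+m-2*k) * hrec
        rw [hD]
        have hE : ∑ k ∈ Finset.range (m+1), dCoef q (m+m+1) (k+1) * chebU y (m+m-2*k)
            = ∑ k ∈ Finset.range m, dCoef q (m+m+1) (k+1) * chebU y (m+m-2*k) := by
          rw [Finset.sum_range_succ, d_mid_zero', zero_mul, add_zero]
        rw [hE]
        ring
      · -- odd case : n = 2*m+1
        rw [show 2*m+1+2 = 2*m+3 from by omega, show 2*m+1+1 = 2*m+2 from by omega,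
          show (2*m+3)/2+1 = m+2 from by omega, show (2*m+2)/2+1 = m+2 from by omega,
          show (2*m+1)/2+1 = m+1 from by omega]
        have hA : 2*y * ∑ k ∈ Finset.range (m+2), dCoef q (2*m+2) k * chebU y (2*m+2-2*k)
            = ((∑ k ∈ Finset.range (m+1), dCoef q (2*m+2) k * chebU y (2*m+3-2*k))
              + dCoef q (2*m+2) (m+1) * chebU y 1)
              + ∑ k ∈ Finset.range (m+1), dCoef q (2*m+2) k * chebU y (2*m+1-2*k) := by
          rw [Finset.mul_sum, Finset.sum_range_succ, show 2*m+2-2*(m+1) = 0 from by omega]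
          have hmain : ∑ k ∈ Finset.range (m+1), 2*y*(dCoef q (2*m+2) k * chebU y (2*m+2-2*k))
              = (∑ k ∈ Finset.range (m+1), dCoef q (2*m+2) k * chebU y (2*m+3-2*k))
                + ∑ k ∈ Finset.range (m+1), dCoef q (2*m+2) k * chebU y (2*m+1-2*k) := by
            rw [← Finset.sum_add_distrib]
            refine Finset.sum_congr rfl fun k hk => ?_
            simp only [Finset.mem_range] at hk
            rw [show 2*m+2-2*k = (2*m+1-2*k)+1 from by omega,
                show 2*m+3-2*k = (2*m+1-2*k)+2 from by omega]
            linear_combination dCoef q (2*m+2) k * cheb_rec y (2*m+1-2*k)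
          rw [hmain, show chebU y 0 = 1 from rfl, show chebU y 1 = 2*y from rfl]
          ring
        rw [hA]
        have hT : (∑ k ∈ Finset.range (m+2), dCoef q (2*m+3) k * chebU y (2*m+3-2*k))
            = (∑ k ∈ Finset.range (m+1), dCoef q (2*m+3) (k+1) * chebU y (2*m+1-2*k))
              + chebU y (2*m+3) := by
          rw [Finset.sum_range_succ']
          congr 1
          · refine Finset.sum_congr rfl fun k hk => ?_
            simp only [Finset.mem_range] at hk
            rw [show 2*m+3-2*(k+1) = 2*m+1-2*k from by omega]
          · rw [dCoef_zero, show 2*m+3-2*0 = 2*m+3 from by omega, one_mul]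
        rw [hT]
        have hD : ∑ k ∈ Finset.range (m+1), dCoef q (2*m+3) (k+1) * chebU y (2*m+1-2*k)
            = ((∑ k ∈ Finset.range (m+1), dCoef q (2*m+2) (k+1) * chebU y (2*m+1-2*k))
              + (∑ k ∈ Finset.range (m+1), dCoef q (2*m+2) k * chebU y (2*m+1-2*k)))
              - (1-q^(2*m+2)) * ∑ k ∈ Finset.range (m+1), dCoef q (2*m+1) k * chebU y (2*m+1-2*k) := by
          rw [Finset.mul_sum, ← Finset.sum_add_distrib, ← Finset.sum_sub_distrib]
          refine Finset.sum_congr rfl fun k hk => ?_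
          have hrec := d_rec q (2*m+1) k
          rw [show 2*m+1+2 = 2*m+3 from by omega, show 2*m+1+1 = 2*m+2 from by omega] at hrec
          linear_combination chebU y (2*m+1-2*k) * hrec
        rw [hD]
        have hQ1 : ∑ k ∈ Finset.range (m+1), dCoef q (2*m+2) k * chebU y (2*m+3-2*k)
            = (∑ k ∈ Finset.range m, dCoef q (2*m+2) (k+1) * chebU y (2*m+1-2*k))
              + chebU y (2*m+3) := by
          rw [Finset.sum_range_succ']
          congr 1
          · refine Finset.sum_congr rfl fun k hk => ?_
            simp only [Finset.mem_range] at hk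
            rw [show 2*m+3-2*(k+1) = 2*m+1-2*k from by omega]
          · rw [dCoef_zero, show 2*m+3-2*0 = 2*m+3 from by omega, one_mul]
        rw [hQ1]
        have hQ2 : ∑ k ∈ Finset.range (m+1), dCoef q (2*m+2) (k+1) * chebU y (2*m+1-2*k)
            = (∑ k ∈ Finset.range m, dCoef q (2*m+2) (k+1) * chebU y (2*m+1-2*k))
              + dCoef q (2*m+2) (m+1) * chebU y 1 := by
          rw [Finset.sum_range_succ, show 2*m+1-2*m = 1 from by omega]
        rw [hQ2]
        ring
  exact fun n => (key n).1

lemma coef_eq (q : ℂ) (n k : ℕ) (hk : k ≤ n) (h : 1 - q ^ (n - k + 1) ≠ 0) :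
    (q ^ k - q ^ (n - k + 1)) / (1 - q ^ (n - k + 1)) * gaussBinom q n k = dCoef q n k := by
  rw [div_mul_eq_mul_div, div_eq_iff h]
  match k with
  | 0 =>
    rw [Nat.sub_zero, dCoef_zero, gb_zero, pow_zero]
    ring
  | (j+1) =>
    simp only [dCoef]
    rw [show n - (j+1) + 1 = n - j from by omega]
    have e := gb_L' q n j
    linear_combination - e

/-- `h_n(y|q) = ∑_{k=0}^{⌊n/2⌋} ((q^k - q^{n-k+1})/(1-q^{n-k+1})) [n choose k]_q U_{n-2k}(y)`,
provided all denominators are nonzero. -/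
theorem qHermite_eq_sum_chebU (n : ℕ) (y q : ℂ)
    (hq : ∀ k ≤ n / 2, 1 - q ^ (n - k + 1) ≠ 0) :
    qHermite q y n =
      ∑ k ∈ Finset.range (n / 2 + 1),
        (q ^ k - q ^ (n - k + 1)) / (1 - q ^ (n - k + 1)) * gaussBinom q n k *
          chebU y (n - 2 * k) := by
  rw [sumId q y n]
  refine Finset.sum_congr rfl fun k hk => ?_
  simp only [Finset.mem_range] at hk
  rw [coef_eq q n k (by omega) (hq k (by omega))]
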